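/- arXiv:1708.01517 — 3 statements merged into one kernel-verified Lean document; each statement's English description precedes it below -/
import Mathlib

section
/- Let 0 < h₁ < h₂ be real numbers, let N ≥ 1 and let j_1 < j_2 < … < j_N be positive integers. Then for every (c_0, c_1,…,c_N) ∈ ℝ^{N+1} with (c_0,…,c_N) ≠ 0, there exists h ∈ [h₁, h₂] such that c_0 + Σ_{i=1}^N c_i · (j_i · tanh(h·j_i))^{1/2} ≠ 0. (Equivalently, the vector (ω_{j_1}(h),…,ω_{j_N}(h),1) is non-degenerate on [h₁,h₂]: its image is not contained in any hyperplane through the origin of ℝ^{N+1}.) -/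
/-!
The function `F h = c₀ + ∑ cᵢ √(jᵢ tanh (h jᵢ))` is real analytic on `(0, ∞)`, so if it vanished
on `[h₁, h₂]` it would vanish on all of `(0, ∞)`. Since `√(tanh x) = 1 - e^{-2x} + o(e^{-2x})`,
the functions `1` and `√(tanh (jᵢ h))` have pairwise distinct asymptotic expansions at infinity:
letting `h → ∞` gives `c₀ + ∑ cᵢ √jᵢ = 0`, and then multiplying by `e^{2 jₘ h}` for the smallest
`jₘ` with `cₘ ≠ 0` isolates `-cₘ √jₘ`, a contradiction.
-/

open Real Filter Topology Set

namespace Real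

lemma tanh_pos {x : ℝ} (hx : 0 < x) : 0 < tanh x := by
  rw [tanh_eq_sinh_div_cosh]
  exact div_pos (sinh_pos_iff.2 hx) (cosh_pos x)

lemma analyticAt_tanh (x : ℝ) : AnalyticAt ℝ tanh x :=
  (analyticAt_sinh.div analyticAt_cosh (cosh_pos x).ne').congr <|
    Eventually.of_forall fun y => (tanh_eq_sinh_div_cosh y).symm

lemma analyticAt_sqrt {x : ℝ} (hx : x ≠ 0) : AnalyticAt ℝ (√·) x :=
  (contDiffAt_sqrt hx).analyticAt

lemma one_sub_tanh (x : ℝ) : 1 - tanh x = 2 / (exp (2 * x) + 1) := by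
  have hexp : exp (2 * x) = exp x * exp x := by rw [two_mul, exp_add]
  rw [tanh_eq_sinh_div_cosh, sinh_eq, cosh_eq, exp_neg, hexp]
  field_simp
  ring

lemma tendsto_exp_mul_one_sub_tanh_atTop :
    Tendsto (fun x => exp (2 * x) * (1 - tanh x)) atTop (𝓝 2) := by
  have hdecay : Tendsto (fun x : ℝ => exp (-(2 * x))) atTop (𝓝 0) :=
    tendsto_exp_neg_atTop_nhds_zero.comp (tendsto_id.const_mul_atTop two_pos)
  have hlim : Tendsto (fun x : ℝ => 2 / (1 + exp (-(2 * x)))) atTop (𝓝 (2 / (1 + 0))) :=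
    tendsto_const_nhds.div (tendsto_const_nhds.add hdecay) (by norm_num)
  rw [add_zero, div_one] at hlim
  refine hlim.congr fun x => ?_
  rw [one_sub_tanh, exp_neg]
  field_simp

lemma tendsto_tanh_atTop : Tendsto tanh atTop (𝓝 1) := by
  have hdecay : Tendsto (fun x : ℝ => exp (-(2 * x))) atTop (𝓝 0) :=
    tendsto_exp_neg_atTop_nhds_zero.comp (tendsto_id.const_mul_atTop two_pos)
  have hgap : Tendsto (fun x => exp (-(2 * x)) * (exp (2 * x) * (1 - tanh x))) atTop
      (𝓝 (0 * 2)) := hdecay.mul tendsto_exp_mul_one_sub_tanh_atTop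
  rw [zero_mul] at hgap
  have hsub := tendsto_const_nhds (x := (1 : ℝ)).sub hgap
  rw [sub_zero] at hsub
  refine hsub.congr fun x => ?_
  rw [← mul_assoc, ← exp_add, neg_add_cancel, exp_zero, one_mul, sub_sub_cancel]

lemma tendsto_sqrt_tanh_atTop : Tendsto (fun x => √(tanh x)) atTop (𝓝 1) := by
  rw [← sqrt_one]
  exact (continuous_sqrt.tendsto 1).comp tendsto_tanh_atTop

lemma tendsto_exp_mul_sqrt_tanh_sub_one_atTop :
    Tendsto (fun x => exp (2 * x) * (√(tanh x) - 1)) atTop (𝓝 (-1)) := by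
  have hlim : Tendsto (fun x => -(exp (2 * x) * (1 - tanh x)) / (√(tanh x) + 1)) atTop
      (𝓝 (-2 / (1 + 1))) :=
    tendsto_exp_mul_one_sub_tanh_atTop.neg.div
      (tendsto_sqrt_tanh_atTop.add tendsto_const_nhds) (by norm_num)
  norm_num at hlim
  refine hlim.congr' ?_
  filter_upwards [eventually_gt_atTop 0] with x hx
  have hsq : √(tanh x) ^ 2 = tanh x := sq_sqrt (tanh_pos hx).le
  have hden : √(tanh x) + 1 ≠ 0 := by positivity
  rw [div_eq_iff hden]
  linear_combination (-exp (2 * x)) * hsq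

lemma tendsto_exp_mul_sqrt_tanh_mul_sub_one {β : ℝ} (hβ : 0 < β) :
    Tendsto (fun x => exp (2 * β * x) * (√(tanh (x * β)) - 1)) atTop (𝓝 (-1)) := by
  refine (tendsto_exp_mul_sqrt_tanh_sub_one_atTop.comp
    (tendsto_id.atTop_mul_const hβ)).congr fun x => ?_
  simp only [Function.comp_apply, id]
  ring_nf

lemma tendsto_exp_mul_sqrt_tanh_mul_sub_one_of_lt {α β : ℝ} (hβ : 0 < β) (hαβ : α < β) :
    Tendsto (fun x => exp (2 * α * x) * (√(tanh (x * β)) - 1)) atTop (𝓝 0) := by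
  have hdecay : Tendsto (fun x => exp (2 * (α - β) * x)) atTop (𝓝 0) :=
    tendsto_exp_atBot.comp (tendsto_id.const_mul_atTop_of_neg (by linarith))
  have hprod := hdecay.mul (tendsto_exp_mul_sqrt_tanh_mul_sub_one hβ)
  rw [zero_mul] at hprod
  refine hprod.congr fun x => ?_
  rw [← mul_assoc, ← exp_add]
  ring_nf

end Real

section AsymptoticIndependence

variable {ι : Type*} [Fintype ι] {b : ι → ℝ}

lemma eq_zero_of_sum_mul_sqrt_tanh_sub_one (hb : ∀ i, 0 < b i) (hinj : Function.Injective b)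
    {d : ι → ℝ} (hd : ∀ᶠ x in atTop, ∑ i, d i * (√(tanh (x * b i)) - 1) = 0) : d = 0 := by
  classical
  by_contra hne
  obtain ⟨k, hk⟩ := Function.ne_iff.1 hne
  obtain ⟨m, hm, hmin⟩ := Finset.exists_min_image {i | d i ≠ 0} b ⟨k, by simpa using hk⟩
  replace hm : d m ≠ 0 := by simpa using hm
  have hterm : ∀ i, Tendsto (fun x => d i * (exp (2 * b m * x) * (√(tanh (x * b i)) - 1)))
      atTop (𝓝 (if i = m then -d m else 0)) := by
    intro i
    by_cases hi : i = m
    · subst hi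
      simpa using (tendsto_exp_mul_sqrt_tanh_mul_sub_one (hb i)).const_mul (d i)
    by_cases hdi : d i = 0
    · simp [hi, hdi]
    have hlt : b m < b i := (hmin i (by simpa using hdi)).lt_of_ne (hinj.ne (Ne.symm hi))
    simpa [hi] using
      (tendsto_exp_mul_sqrt_tanh_mul_sub_one_of_lt (hb i) hlt).const_mul (d i)
  have hsum := tendsto_finsetSum Finset.univ fun i _ => hterm i
  rw [Finset.sum_ite_eq' Finset.univ m, if_pos (Finset.mem_univ m)] at hsum
  have hzero : ∀ᶠ x in atTop,
      ∑ i, d i * (exp (2 * b m * x) * (√(tanh (x * b i)) - 1)) = 0 := by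
    filter_upwards [hd] with x hx
    simp_rw [mul_left_comm (d _), ← Finset.mul_sum, hx, mul_zero]
  exact hm (neg_eq_zero.1 (tendsto_nhds_unique (hsum.congr' hzero) tendsto_const_nhds))

lemma eq_zero_of_add_sum_mul_sqrt_tanh (hb : ∀ i, 0 < b i) (hinj : Function.Injective b)
    {c₀ : ℝ} {d : ι → ℝ} (hd : ∀ᶠ x in atTop, c₀ + ∑ i, d i * √(tanh (x * b i)) = 0) :
    c₀ = 0 ∧ d = 0 := by
  have hlim : Tendsto (fun x => c₀ + ∑ i, d i * √(tanh (x * b i))) atTop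
      (𝓝 (c₀ + ∑ i, d i * 1)) :=
    tendsto_const_nhds.add <| tendsto_finsetSum _ fun i _ =>
      (tendsto_sqrt_tanh_atTop.comp (tendsto_id.atTop_mul_const (hb i))).const_mul (d i)
  have hval : c₀ + ∑ i, d i = 0 := by
    simpa using tendsto_nhds_unique (hlim.congr' hd) tendsto_const_nhds
  have hd0 : d = 0 := by
    refine eq_zero_of_sum_mul_sqrt_tanh_sub_one hb hinj ?_
    filter_upwards [hd] with x hx
    simp only [mul_sub, mul_one, Finset.sum_sub_distrib]
    linarith
  refine ⟨?_, hd0⟩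
  simpa [hd0] using hval

end AsymptoticIndependence

lemma analyticOnNhd_sqrt_mul_tanh {β : ℝ} (hβ : 0 < β) :
    AnalyticOnNhd ℝ (fun x => √(β * tanh (x * β))) (Ioi 0) := by
  intro x hx
  have hinner : AnalyticAt ℝ (fun x => β * tanh (x * β)) x :=
    analyticAt_const.mul <| (analyticAt_tanh _).comp (analyticAt_id.mul analyticAt_const)
  exact (analyticAt_sqrt (mul_pos hβ (tanh_pos (mul_pos hx hβ))).ne').comp_of_eq hinner rfl

lemma AnalyticOnNhd.eqOn_zero_of_eqOn_zero_Icc {f : ℝ → ℝ} {U : Set ℝ}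
    (hf : AnalyticOnNhd ℝ f U) (hU : IsPreconnected U) {h₁ h₂ : ℝ} (hh : h₁ < h₂)
    (hsub : Icc h₁ h₂ ⊆ U) (hzero : EqOn f 0 (Icc h₁ h₂)) : EqOn f 0 U :=
  hf.eqOn_zero_of_preconnected_of_eventuallyEq_zero hU
    (hsub ⟨by linarith, by linarith⟩ : (h₁ + h₂) / 2 ∈ U)
    (mem_of_superset (Icc_mem_nhds (by linarith) (by linarith)) hzero)

theorem frequencies_and_one_nondegenerate_general (h₁ h₂ : ℝ) (hh₁ : 0 < h₁) (hh : h₁ < h₂)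
    (N : ℕ) (j : Fin N → ℕ) (hj1 : ∀ i, 1 ≤ j i) (hj : StrictMono j)
    (c₀ : ℝ) (c : Fin N → ℝ) (hc : ¬ (c₀ = 0 ∧ c = 0)) :
    ∃ h ∈ Set.Icc h₁ h₂,
      c₀ + (∑ i, c i * Real.sqrt ((j i : ℝ) * Real.tanh (h * (j i : ℝ)))) ≠ 0 := by
  by_contra! hvanish
  have hjpos : ∀ i, (0 : ℝ) < j i := fun i => by exact_mod_cast hj1 i
  have hanalytic : AnalyticOnNhd ℝ
      (fun h => c₀ + ∑ i, c i * √((j i : ℝ) * tanh (h * j i))) (Ioi 0) := fun h hh =>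
    analyticAt_const.add <| Finset.analyticAt_fun_sum _ fun i _ =>
      analyticAt_const.mul (analyticOnNhd_sqrt_mul_tanh (hjpos i) h hh)
  have hzero := hanalytic.eqOn_zero_of_eqOn_zero_Icc isPreconnected_Ioi hh
    (fun h hh' => hh₁.trans_le hh'.1) hvanish
  have hinj : Function.Injective fun i => (j i : ℝ) := Nat.cast_injective.comp hj.injective
  obtain ⟨hc₀, hd⟩ := eq_zero_of_add_sum_mul_sqrt_tanh (d := fun i => c i * √(j i : ℝ))
    hjpos hinj <| by
      filter_upwards [eventually_gt_atTop 0] with h hh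
      simpa [sqrt_mul (hjpos _).le, mul_assoc] using hzero (mem_Ioi.2 hh)
  refine hc ⟨hc₀, funext fun i => ?_⟩
  simpa [(sqrt_pos.2 (hjpos i)).ne'] using congr_fun hd i

/-- Non-degeneracy of (ω_{j_1}(h), …, ω_{j_N}(h), 1): for any finitely many distinct positive
integers j_1 < … < j_N and any (c₀, c) ∈ ℝ^{N+1} not identically zero, there is
h ∈ [h₁, h₂] with c₀ + Σ c_i ω_{j_i}(h) ≠ 0. -/
theorem frequencies_and_one_nondegenerate (h₁ h₂ : ℝ) (hh₁ : 0 < h₁) (hh : h₁ < h₂)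
    (N : ℕ) (hN : 1 ≤ N) (j : Fin N → ℕ) (hj1 : ∀ i, 1 ≤ j i) (hj : StrictMono j)
    (c₀ : ℝ) (c : Fin N → ℝ) (hc : ¬ (c₀ = 0 ∧ c = 0)) :
    ∃ h ∈ Set.Icc h₁ h₂,
      c₀ + (∑ i, c i * Real.sqrt ((j i : ℝ) * Real.tanh (h * (j i : ℝ)))) ≠ 0 :=
  frequencies_and_one_nondegenerate_general h₁ h₂ hh₁ hh N j hj1 hj c₀ c hc
end

section
/- (Perturbed transversality.) Let 0 < h₁ < h₂, let S ⊂ {1,2,3,…} be finite with ν := |S|, let k₀* ∈ ℕ, ρ₀ > 0 and C > 0. Write Ω_j(h) := (j·tanh(h·j))^{1/2} and ω(h) := (Ω_i(h))_{i∈S}. Assume the unperturbed transversality conditions hold: for all h ∈ [h₁,h₂], (0) max_{k≤k₀*}|∂_h^k(ω(h)·ℓ)| ≥ ρ₀⟨ℓ⟩ for all ℓ ∈ ℤ^S∖{0}; (I) max_{k≤k₀*}|∂_h^k(ω(h)·ℓ + Ω_j(h))| ≥ ρ₀⟨ℓ⟩ for all ℓ ∈ ℤ^S and j ∈ ℕ⁺∖S;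 (II−) max_{k≤k₀*}|∂_h^k(ω(h)·ℓ + Ω_j(h) − Ω_{j'}(h))| ≥ ρ₀⟨ℓ⟩ for all ℓ ∈ ℤ^S∖{0} and j,j' ∈ ℕ⁺∖S; (II+) max_{k≤k₀*}|∂_h^k(ω(h)·ℓ + Ω_j(h) + Ω_{j'}(h))| ≥ ρ₀⟨ℓ⟩ for all ℓ ∈ ℤ^S and j,j' ∈ ℕ⁺∖S. Then there exists δ₀ > 0, depending only on h₁, h₂, k₀*, ρ₀, C and ν, with the following property. Let 0 < δ ≤ δ₀ and let ω_ε : [h₁,h₂] → ℝ^S, m : [h₁,h₂] → ℝ, and r_j : [h₁,h₂] → ℝ (for j ∈ ℕ⁺∖S) be k₀*-times continuously differentiable functions satisfying, for all 0 ≤ k ≤ k₀* and all h ∈ [h₁,h₂]: max_{i∈S}|∂_h^k(ω_ε − ω)_i(h)| ≤ δ, |∂_h^k(m(h) − 1)| ≤ δ, and √j·|∂_h^k r_j(h)| ≤ δ for all j ∈ ℕ⁺∖S. Set μ_j(h) := m(h)·Ω_j(h) + r_j(h). Then for all h ∈ [h₁,h₂]: (0') max_{k≤k₀*}|∂_h^k(ω_ε(h)·ℓ)|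 ≥ (ρ₀/2)⟨ℓ⟩ for all ℓ ∈ ℤ^S∖{0}; (I') max_{k≤k₀*}|∂_h^k(ω_ε(h)·ℓ + μ_j(h))| ≥ (ρ₀/2)⟨ℓ⟩ for all ℓ ∈ ℤ^S and j ∈ ℕ⁺∖S with √j ≤ C⟨ℓ⟩; (II−') max_{k≤k₀*}|∂_h^k(ω_ε(h)·ℓ + μ_j(h) − μ_{j'}(h))| ≥ (ρ₀/2)⟨ℓ⟩ for all ℓ ∈ ℤ^S∖{0} and j,j' ∈ ℕ⁺∖S with |√j − √j'| ≤ C⟨ℓ⟩; (II+') max_{k≤k₀*}|∂_h^k(ω_ε(h)·ℓ + μ_j(h) + μ_{j'}(h))| ≥ (ρ₀/2)⟨ℓ⟩ for all ℓ ∈ ℤ^S and j,j' ∈ ℕ⁺∖S with √j + √j' ≤ C⟨ℓ⟩. -/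
/-- The linear frequency Ω_j(h) = √(j tanh(h j)) of the gravity water waves system. -/
noncomputable def freq (j : ℕ) (h : ℝ) : ℝ := Real.sqrt ((j : ℝ) * Real.tanh (h * (j : ℝ)))

/-- ⟨ℓ⟩ := max{1, max_{i ∈ S} |ℓ_i|} for an integer vector ℓ indexed by the finite set S. -/
noncomputable def brak (S : Finset ℕ) (ℓ : ℕ → ℤ) : ℝ :=
  ((max 1 (S.sup fun i => (ℓ i).natAbs) : ℕ) : ℝ)

/-!
Write Ω_j(h) = √j · ψ(e^{-2hj}) with ψ(q) = √((1 - q)/(1 + q)), which is smooth near q = 0 with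
ψ(0) = 1. Every h-derivative of Ω_j - √j is then √j (2j)ⁿ times a smooth function of e^{-2hj}
vanishing at 0, hence O(j^{n+1} e^{-2h₁j}) for h ≥ h₁, bounded uniformly in j. So the only
unbounded part of the normal frequencies in the transversality functions is the constant √j
(or √j ± √j'), which the restrictions on j, j' bound by C⟨ℓ⟩ and which enters the perturbation
only through (m - 1)·Ω_j. By the Leibniz rule the derivatives of order ≤ k₀ of the perturbation
are O(δ⟨ℓ⟩), and δ₀ is chosen so that they are at most ρ₀⟨ℓ⟩/2.
-/

open Real Set Filter Topology
open scoped ContDiff Nat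

def DerivsBoundedAt (n : ℕ) (f : ℝ → ℝ) (x B : ℝ) : Prop :=
  ContDiffAt ℝ n f x ∧ ∀ k ≤ n, |iteratedDeriv k f x| ≤ B

namespace DerivsBoundedAt

variable {n : ℕ} {f g : ℝ → ℝ} {x A B : ℝ}

theorem nonneg (hf : DerivsBoundedAt n f x B) : 0 ≤ B :=
  (abs_nonneg _).trans (hf.2 0 n.zero_le)

theorem contDiffAt_of_le (hf : DerivsBoundedAt n f x B) {k : ℕ} (hk : k ≤ n) :
    ContDiffAt ℝ k f x :=
  hf.1.of_le (by exact_mod_cast hk)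

theorem mono (hf : DerivsBoundedAt n f x A) (hAB : A ≤ B) : DerivsBoundedAt n f x B :=
  ⟨hf.1, fun k hk => (hf.2 k hk).trans hAB⟩

theorem const (c : ℝ) : DerivsBoundedAt n (fun _ => c) x |c| := by
  refine ⟨contDiffAt_const, fun k _ => ?_⟩
  rw [iteratedDeriv_const]
  split_ifs <;> simp

theorem zero (hB : 0 ≤ B) : DerivsBoundedAt n (fun _ => 0) x B :=
  (const 0).mono (by simpa using hB)

theorem add (hf : DerivsBoundedAt n f x A) (hg : DerivsBoundedAt n g x B) :
    DerivsBoundedAt n (fun t => f t + g t) x (A + B) := by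
  refine ⟨hf.1.add hg.1, fun k hk => ?_⟩
  rw [iteratedDeriv_fun_add (hf.contDiffAt_of_le hk) (hg.contDiffAt_of_le hk)]
  exact (abs_add_le _ _).trans (add_le_add (hf.2 k hk) (hg.2 k hk))

theorem sub (hf : DerivsBoundedAt n f x A) (hg : DerivsBoundedAt n g x B) :
    DerivsBoundedAt n (fun t => f t - g t) x (A + B) := by
  refine ⟨hf.1.sub hg.1, fun k hk => ?_⟩
  rw [iteratedDeriv_fun_sub (hf.contDiffAt_of_le hk) (hg.contDiffAt_of_le hk)]
  exact (abs_sub _ _).trans (add_le_add (hf.2 k hk) (hg.2 k hk))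

theorem const_mul (hf : DerivsBoundedAt n f x B) {c L : ℝ} (hc : |c| ≤ L) :
    DerivsBoundedAt n (fun t => c * f t) x (L * B) := by
  refine ⟨contDiffAt_const.mul hf.1, fun k hk => ?_⟩
  rw [iteratedDeriv_const_mul_field, abs_mul]
  exact mul_le_mul hc (hf.2 k hk) (abs_nonneg _) ((abs_nonneg _).trans hc)

theorem sum {ι : Type*} {s : Finset ι} {f : ι → ℝ → ℝ} {B : ι → ℝ}
    (hf : ∀ i ∈ s, DerivsBoundedAt n (f i) x (B i)) :
    DerivsBoundedAt n (fun t => ∑ i ∈ s, f i t) x (∑ i ∈ s, B i) := by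
  refine ⟨ContDiffAt.sum fun i hi => (hf i hi).1, fun k hk => ?_⟩
  rw [iteratedDeriv_fun_sum fun i hi => (hf i hi).contDiffAt_of_le hk]
  exact (Finset.abs_sum_le_sum_abs _ _).trans (Finset.sum_le_sum fun i hi => (hf i hi).2 k hk)

theorem mul (hf : DerivsBoundedAt n f x A) (hg : DerivsBoundedAt n g x B) :
    DerivsBoundedAt n (fun t => f t * g t) x (2 ^ n * (A * B)) := by
  refine ⟨hf.1.mul hg.1, fun k hk => ?_⟩
  rw [iteratedDeriv_fun_mul (hf.contDiffAt_of_le hk) (hg.contDiffAt_of_le hk)]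
  calc |∑ i ∈ Finset.range (k + 1), (k.choose i : ℝ) * iteratedDeriv i f x *
          iteratedDeriv (k - i) g x|
      ≤ ∑ i ∈ Finset.range (k + 1), (k.choose i : ℝ) * (A * B) := by
        refine (Finset.abs_sum_le_sum_abs _ _).trans (Finset.sum_le_sum fun i hi => ?_)
        have hik : i ≤ k := Nat.lt_succ_iff.mp (Finset.mem_range.mp hi)
        rw [abs_mul, abs_mul, Nat.abs_cast, mul_assoc]
        exact mul_le_mul_of_nonneg_left (mul_le_mul (hf.2 i (hik.trans hk))
          (hg.2 (k - i) ((k.sub_le i).trans hk)) (abs_nonneg _) hf.nonneg) (Nat.cast_nonneg _)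
    _ = 2 ^ k * (A * B) := by rw [← Finset.sum_mul, ← Nat.cast_sum, Nat.sum_range_choose]; norm_cast
    _ ≤ 2 ^ n * (A * B) :=
        mul_le_mul_of_nonneg_right (pow_le_pow_right₀ one_le_two hk)
          (mul_nonneg hf.nonneg hg.nonneg)

theorem perturbation {ι : Type*} {s : Finset ι} {c : ι → ℝ}
    {ω₀ ωε : ι → ℝ → ℝ} {m u ρ : ℝ → ℝ} {δ L ε : ℝ}
    (hωε : ∀ i ∈ s, DerivsBoundedAt n (fun t => ωε i t - ω₀ i t) x δ) (hc : ∀ i ∈ s, |c i| ≤ L)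
    (hm : DerivsBoundedAt n (fun t => m t - 1) x δ) (hu : DerivsBoundedAt n u x A)
    (hρ : DerivsBoundedAt n ρ x ε) :
    DerivsBoundedAt n
      (fun t => (∑ i ∈ s, c i * ωε i t + (m t * u t + ρ t)) - (∑ i ∈ s, c i * ω₀ i t + u t)) x
      (s.card * (L * δ) + (2 ^ n * (δ * A) + ε)) := by
  have hsplit : (fun t => (∑ i ∈ s, c i * ωε i t + (m t * u t + ρ t))
      - (∑ i ∈ s, c i * ω₀ i t + u t))
      = fun t => ∑ i ∈ s, c i * (ωε i t - ω₀ i t) + ((m t - 1) * u t + ρ t) := by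
    ext t
    simp only [mul_sub, Finset.sum_sub_distrib]
    ring
  rw [hsplit, show (s.card : ℝ) * (L * δ) = ∑ _i ∈ s, L * δ by simp]
  exact (sum fun i hi => (hωε i hi).const_mul (hc i hi)).add ((hm.mul hu).add hρ)

end DerivsBoundedAt

theorem exists_le_abs_iteratedDeriv_of_derivsBoundedAt_sub {F₀ F : ℝ → ℝ} {n : ℕ}
    {x a ε : ℝ} (hF₀ : ContDiffAt ℝ n F₀ x) (hd : DerivsBoundedAt n (fun t => F t - F₀ t) x ε)
    (h₀ : ∃ k ≤ n, a ≤ |iteratedDeriv k F₀ x|) : ∃ k ≤ n, a - ε ≤ |iteratedDeriv k F x| := by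
  obtain ⟨k, hk, hak⟩ := h₀
  have hF : F = fun t => F₀ t + (F t - F₀ t) := by ext t; ring
  refine ⟨k, hk, ?_⟩
  rw [hF, iteratedDeriv_fun_add (hF₀.of_le (by exact_mod_cast hk)) (hd.contDiffAt_of_le hk)]
  have htri := abs_sub_abs_le_abs_sub (iteratedDeriv k F₀ x)
    (-iteratedDeriv k (fun t => F t - F₀ t) x)
  rw [sub_neg_eq_add, abs_neg] at htri
  linarith [hd.2 k hk]

theorem tanh_eq_one_sub_exp_div_one_add_exp (x : ℝ) :
    tanh x = (1 - exp (-(2 * x))) / (1 + exp (-(2 * x))) := by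
  rw [tanh_eq_sinh_div_cosh, sinh_eq, cosh_eq, show -(2 * x) = -x + -x by ring, exp_add, exp_neg]
  field_simp

noncomputable def sqrtTanhProfile (q : ℝ) : ℝ := √((1 - q) / (1 + q))

theorem contDiffOn_sqrtTanhProfile : ContDiffOn ℝ ∞ sqrtTanhProfile (Ioo (-1) 1) := by
  intro q ⟨hq₁, hq₂⟩
  have h₁ : 0 < 1 + q := by linarith
  have h₂ : 0 < (1 - q) / (1 + q) := div_pos (by linarith) h₁
  exact ((contDiffAt_sqrt h₂.ne').comp q ((contDiffAt_const.sub contDiffAt_id).div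
    (contDiffAt_const.add contDiffAt_id) h₁.ne')).contDiffWithinAt

theorem freq_eq_sqrt_mul_sqrtTanhProfile (j : ℕ) (t : ℝ) :
    freq j t = √j * sqrtTanhProfile (exp (-(2 * j * t))) := by
  rw [freq, sqrt_mul (Nat.cast_nonneg j), sqrtTanhProfile, tanh_eq_one_sub_exp_div_one_add_exp,
    show 2 * (t * j) = 2 * j * t by ring]

theorem exp_neg_mem_Ioo {x : ℝ} (hx : 0 < x) : exp (-x) ∈ Ioo (-1) 1 :=
  ⟨by linarith [exp_pos (-x)], exp_lt_one_iff.mpr (by linarith)⟩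

theorem contDiffAt_freq (j : ℕ) {t : ℝ} (ht : 0 < t) {n : ℕ} :
    ContDiffAt ℝ n (freq j) t := by
  rcases Nat.eq_zero_or_pos j with rfl | hj
  · rw [show freq 0 = fun _ => 0 by ext; simp [freq]]
    exact contDiffAt_const
  have hjt : 0 < 2 * (j : ℝ) * t := by positivity
  have hψ : ContDiffAt ℝ n sqrtTanhProfile (exp (-(2 * j * t))) :=
    ((contDiffOn_sqrtTanhProfile.contDiffAt (isOpen_Ioo.mem_nhds (exp_neg_mem_Ioo hjt)))).of_le
      (by exact_mod_cast le_top)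
  rw [show freq j = fun s => √j * sqrtTanhProfile (exp (-(2 * j * s))) from
    funext (freq_eq_sqrt_mul_sqrtTanhProfile j)]
  have hexp : ContDiffAt ℝ n (fun s : ℝ => exp (-(2 * j * s))) t := by fun_prop
  exact contDiffAt_const.mul (hψ.comp t hexp :)

theorem pow_mul_exp_neg_mul_le {x c : ℝ} (hx : 0 ≤ x) (hc : 0 < c) (n : ℕ) :
    x ^ n * exp (-(c * x)) ≤ n ! / c ^ n := by
  have h := pow_div_factorial_le_exp (c * x) (mul_nonneg hc.le hx) n
  rw [div_le_iff₀ (by positivity), mul_pow] at h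
  rw [le_div_iff₀ (by positivity), exp_neg]
  have hexp := exp_pos (c * x)
  calc x ^ n * (exp (c * x))⁻¹ * c ^ n = c ^ n * x ^ n * (exp (c * x))⁻¹ := by ring
    _ ≤ exp (c * x) * n ! * (exp (c * x))⁻¹ := by gcongr
    _ = n ! := by field_simp

theorem exists_iteratedDeriv_comp_exp_neg_mul {g : ℝ → ℝ} (hg : ContDiffOn ℝ ∞ g (Ioo (-1) 1))
    (hg0 : g 0 = 0) (n : ℕ) :
    ∃ Φ : ℝ → ℝ, ContDiffOn ℝ ∞ Φ (Ioo (-1) 1) ∧ Φ 0 = 0 ∧ ∀ c t : ℝ, 0 < c → 0 < t →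
      iteratedDeriv n (fun s => g (exp (-(c * s)))) t = (-c) ^ n * Φ (exp (-(c * t))) := by
  -- `Φ = (q d/dq)ⁿ g`
  induction n with
  | zero => exact ⟨g, hg, hg0, fun c t _ _ => by simp⟩
  | succ n ih =>
    obtain ⟨Φ, hΦ, -, hrep⟩ := ih
    refine ⟨fun q => q * deriv Φ q,
      contDiffOn_id.mul (hΦ.deriv_of_isOpen isOpen_Ioo (by simp)), by simp, fun c t hc ht => ?_⟩
    have hq := exp_neg_mem_Ioo (mul_pos hc ht)
    have hnear : iteratedDeriv n (fun s => g (exp (-(c * s)))) =ᶠ[𝓝 t]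
        fun s => (-c) ^ n * Φ (exp (-(c * s))) :=
      eventually_of_mem (Ioi_mem_nhds ht) fun s hs => hrep c s hc hs
    have hΦ' : HasDerivAt Φ (deriv Φ (exp (-(c * t)))) (exp (-(c * t))) :=
      ((hΦ.differentiableOn (by simp)).differentiableAt (isOpen_Ioo.mem_nhds hq)).hasDerivAt
    have hinner : HasDerivAt (fun s => exp (-(c * s))) (exp (-(c * t)) * -c) t := by
      simpa using ((hasDerivAt_id t).const_mul c).neg.exp
    have hderiv : HasDerivAt (fun s => (-c) ^ n * Φ (exp (-(c * s))))
        ((-c) ^ n * (deriv Φ (exp (-(c * t))) * (exp (-(c * t)) * -c))) t :=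
      (hΦ'.comp t hinner).const_mul _
    rw [iteratedDeriv_succ, hnear.deriv_eq, hderiv.deriv]
    ring

theorem exists_abs_le_mul_of_contDiffOn {Φ : ℝ → ℝ} (hΦ : ContDiffOn ℝ 1 Φ (Ioo (-1) 1))
    (hΦ0 : Φ 0 = 0) {q₀ : ℝ} (hq₀ : q₀ < 1) : ∃ L : ℝ, 0 ≤ L ∧ ∀ q ∈ Icc 0 q₀, |Φ q| ≤ L * q := by
  have hsub : Icc 0 q₀ ⊆ Ioo (-1) 1 := fun q hq => ⟨by linarith [hq.1], by linarith [hq.2]⟩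
  obtain ⟨L, hL⟩ := (hΦ.mono hsub).exists_lipschitzOnWith one_ne_zero (convex_Icc 0 q₀)
    isCompact_Icc
  refine ⟨L, L.2, fun q hq => ?_⟩
  have := hL.dist_le_mul q hq 0 ⟨le_rfl, hq.1.trans hq.2⟩
  rwa [dist_eq_norm, dist_eq_norm, hΦ0, sub_zero, sub_zero, norm_eq_abs, norm_eq_abs,
    abs_of_nonneg hq.1] at this

theorem exists_abs_iteratedDeriv_sqrt_mul_comp_exp_neg_le {g : ℝ → ℝ}
    (hg : ContDiffOn ℝ ∞ g (Ioo (-1) 1)) (hg0 : g 0 = 0) {h₁ : ℝ} (hh₁ : 0 < h₁) (n : ℕ) :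
    ∃ B, ∀ j : ℕ, 1 ≤ j → ∀ t, h₁ ≤ t →
      |iteratedDeriv n (fun s => √j * g (exp (-(2 * j * s)))) t| ≤ B := by
  obtain ⟨Φ, hΦ, hΦ0, hrep⟩ := exists_iteratedDeriv_comp_exp_neg_mul hg hg0 n
  obtain ⟨L, hL0, hL⟩ := exists_abs_le_mul_of_contDiffOn (hΦ.of_le (by exact_mod_cast le_top))
    hΦ0 (exp_lt_one_iff.mpr (by linarith : -(2 * h₁) < 0))
  refine ⟨L * ((n + 1)! / h₁ ^ (n + 1)), fun j hj t ht => ?_⟩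
  have hj' : (1 : ℝ) ≤ j := by exact_mod_cast hj
  have hsqrt : √j ≤ 2 * j := by nlinarith [sq_sqrt (Nat.cast_nonneg (α := ℝ) j), sqrt_nonneg j]
  have hq : exp (-(2 * j * t)) ∈ Icc 0 (exp (-(2 * h₁))) :=
    ⟨(exp_pos _).le, exp_le_exp.mpr (by nlinarith)⟩
  have hΦq : |Φ (exp (-(2 * j * t)))| ≤ L * exp (-(h₁ * (2 * j))) :=
    (hL _ hq).trans (mul_le_mul_of_nonneg_left (exp_le_exp.mpr (by nlinarith)) hL0)
  rw [iteratedDeriv_const_mul_field, hrep _ t (by positivity) (by linarith), abs_mul, abs_mul,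
    abs_pow, abs_neg, abs_of_pos (by positivity : (0 : ℝ) < 2 * j), abs_of_nonneg (sqrt_nonneg _)]
  calc √j * ((2 * j) ^ n * |Φ (exp (-(2 * j * t)))|)
      ≤ 2 * j * ((2 * j) ^ n * (L * exp (-(h₁ * (2 * j))))) := by gcongr
    _ = L * ((2 * j) ^ (n + 1) * exp (-(h₁ * (2 * j)))) := by ring
    _ ≤ L * ((n + 1)! / h₁ ^ (n + 1)) :=
        mul_le_mul_of_nonneg_left (pow_mul_exp_neg_mul_le (by positivity) hh₁ _) hL0

theorem exists_derivsBoundedAt_freq_sub_sqrt {h₁ : ℝ} (hh₁ : 0 < h₁) (n : ℕ) :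
    ∃ M, 0 ≤ M ∧ ∀ j : ℕ, 1 ≤ j → ∀ t, h₁ ≤ t →
      DerivsBoundedAt n (fun s => freq j s - √j) t M := by
  have hg : ContDiffOn ℝ ∞ (fun q => sqrtTanhProfile q - 1) (Ioo (-1) 1) :=
    contDiffOn_sqrtTanhProfile.sub contDiffOn_const
  have hg0 : sqrtTanhProfile 0 - 1 = 0 := by simp [sqrtTanhProfile]
  choose B hB using exists_abs_iteratedDeriv_sqrt_mul_comp_exp_neg_le hg hg0 hh₁
  refine ⟨∑ k ∈ Finset.range (n + 1), |B k|, by positivity, fun j hj t ht =>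
    ⟨(contDiffAt_freq j (by linarith)).sub contDiffAt_const, fun k hk => ?_⟩⟩
  have heq : (fun s => freq j s - √j)
      = fun s => √j * (sqrtTanhProfile (exp (-(2 * j * s))) - 1) := by
    ext s
    rw [freq_eq_sqrt_mul_sqrtTanhProfile]
    ring
  rw [heq]
  exact (hB k j hj t ht).trans ((le_abs_self _).trans (Finset.single_le_sum
    (fun i _ => abs_nonneg (B i)) (Finset.mem_range.mpr (by omega))))

theorem one_le_brak (S : Finset ℕ) (ℓ : ℕ → ℤ) : 1 ≤ brak S ℓ := by
  rw [brak]
  exact_mod_cast le_max_left 1 _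

theorem abs_le_brak {S : Finset ℕ} (ℓ : ℕ → ℤ) {i : ℕ} (hi : i ∈ S) : |(ℓ i : ℝ)| ≤ brak S ℓ := by
  rw [brak, ← Int.cast_abs, Int.abs_eq_natAbs]
  exact_mod_cast (Finset.le_sup (f := fun i => (ℓ i).natAbs) hi).trans (le_max_right _ _)

/-- The unperturbed frequency is split as `v + c`: the constant `c` (`√j`, `√j ± √j'`) is the part
that is unbounded in `j`, and `v` has derivatives bounded uniformly in `j`. -/
theorem exists_le_abs_iteratedDeriv_perturbed {S : Finset ℕ} {ωε : ℕ → ℝ → ℝ} {m : ℝ → ℝ}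
    {n : ℕ} {x δ ρ₀ C M : ℝ} (hx : 0 < x)
    (hωε : ∀ i ∈ S, DerivsBoundedAt n (fun t => ωε i t - freq i t) x δ)
    (hm : DerivsBoundedAt n (fun t => m t - 1) x δ)
    (hδ : δ ≤ ρ₀ / (2 * (S.card + 2 ^ n * (C + 2 * M) + 2)))
    {ℓ : ℕ → ℤ} {v ρ F₀ F : ℝ → ℝ} {c : ℝ}
    (hv : DerivsBoundedAt n v x (2 * M)) (hc : |c| ≤ C * brak S ℓ)
    (hρ : DerivsBoundedAt n ρ x (2 * δ))
    (hF₀ : ∀ t, F₀ t = ∑ i ∈ S, (ℓ i : ℝ) * freq i t + (v t + c))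
    (hF : ∀ t, F t = ∑ i ∈ S, (ℓ i : ℝ) * ωε i t + (m t * (v t + c) + ρ t))
    (h₀ : ∃ k ≤ n, ρ₀ * brak S ℓ ≤ |iteratedDeriv k F₀ x|) :
    ∃ k ≤ n, ρ₀ / 2 * brak S ℓ ≤ |iteratedDeriv k F x| := by
  obtain rfl := funext hF₀
  obtain rfl := funext hF
  have hL := one_le_brak S ℓ
  have hC : 0 ≤ C := by nlinarith [abs_nonneg c]
  have hM := hv.nonneg
  rw [le_div_iff₀ (by positivity)] at hδ
  have hu : DerivsBoundedAt n (fun t => v t + c) x ((C + 2 * M) * brak S ℓ) :=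
    (hv.add (DerivsBoundedAt.const c)).mono (by nlinarith)
  have hF₀_cd : ContDiffAt ℝ n (fun t => ∑ i ∈ S, (ℓ i : ℝ) * freq i t + (v t + c)) x :=
    (ContDiffAt.sum fun i _ => contDiffAt_const.mul (contDiffAt_freq i hx)).add hu.1
  obtain ⟨k, hk, hkF⟩ := exists_le_abs_iteratedDeriv_of_derivsBoundedAt_sub hF₀_cd
    (DerivsBoundedAt.perturbation hωε (fun i hi => abs_le_brak ℓ hi) hm hu hρ) h₀
  refine ⟨k, hk, le_trans ?_ hkF⟩
  nlinarith [hm.nonneg]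

theorem perturbed_transversality_general (h₁ h₂ : ℝ) (hh₁ : 0 < h₁)
    (S : Finset ℕ) (k₀ : ℕ) (ρ₀ C : ℝ) (hρ₀ : 0 < ρ₀) (hC : 0 < C)
    (H0 : ∀ h ∈ Set.Icc h₁ h₂, ∀ ℓ : ℕ → ℤ, (∃ i ∈ S, ℓ i ≠ 0) →
      ∃ k ≤ k₀, ρ₀ * brak S ℓ ≤
        |iteratedDeriv k (fun t => ∑ i ∈ S, (ℓ i : ℝ) * freq i t) h|)
    (HI : ∀ h ∈ Set.Icc h₁ h₂, ∀ ℓ : ℕ → ℤ, ∀ j : ℕ, 1 ≤ j → j ∉ S →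
      ∃ k ≤ k₀, ρ₀ * brak S ℓ ≤
        |iteratedDeriv k (fun t => (∑ i ∈ S, (ℓ i : ℝ) * freq i t) + freq j t) h|)
    (HIIminus : ∀ h ∈ Set.Icc h₁ h₂, ∀ ℓ : ℕ → ℤ, (∃ i ∈ S, ℓ i ≠ 0) →
      ∀ j j' : ℕ, 1 ≤ j → j ∉ S → 1 ≤ j' → j' ∉ S →
      ∃ k ≤ k₀, ρ₀ * brak S ℓ ≤
        |iteratedDeriv k (fun t => (∑ i ∈ S, (ℓ i : ℝ) * freq i t) + freq j t - freq j' t) h|)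
    (HIIplus : ∀ h ∈ Set.Icc h₁ h₂, ∀ ℓ : ℕ → ℤ, ∀ j j' : ℕ, 1 ≤ j → j ∉ S → 1 ≤ j' → j' ∉ S →
      ∃ k ≤ k₀, ρ₀ * brak S ℓ ≤
        |iteratedDeriv k (fun t => (∑ i ∈ S, (ℓ i : ℝ) * freq i t) + freq j t + freq j' t) h|) :
    ∃ δ₀ : ℝ, 0 < δ₀ ∧ ∀ δ : ℝ, 0 < δ → δ ≤ δ₀ →
      ∀ (ωε : ℕ → ℝ → ℝ) (m : ℝ → ℝ) (r : ℕ → ℝ → ℝ),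
        (∀ i ∈ S, ContDiff ℝ k₀ (ωε i)) →
        ContDiff ℝ k₀ m →
        (∀ j : ℕ, 1 ≤ j → j ∉ S → ContDiff ℝ k₀ (r j)) →
        (∀ k ≤ k₀, ∀ h ∈ Set.Icc h₁ h₂, ∀ i ∈ S,
          |iteratedDeriv k (fun t => ωε i t - freq i t) h| ≤ δ) →
        (∀ k ≤ k₀, ∀ h ∈ Set.Icc h₁ h₂,
          |iteratedDeriv k (fun t => m t - 1) h| ≤ δ) →
        (∀ k ≤ k₀, ∀ h ∈ Set.Icc h₁ h₂, ∀ j : ℕ, 1 ≤ j → j ∉ S →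
          Real.sqrt j * |iteratedDeriv k (r j) h| ≤ δ) →
        ∀ h ∈ Set.Icc h₁ h₂,
          (∀ ℓ : ℕ → ℤ, (∃ i ∈ S, ℓ i ≠ 0) →
            ∃ k ≤ k₀, ρ₀ / 2 * brak S ℓ ≤
              |iteratedDeriv k (fun t => ∑ i ∈ S, (ℓ i : ℝ) * ωε i t) h|) ∧
          (∀ ℓ : ℕ → ℤ, ∀ j : ℕ, 1 ≤ j → j ∉ S → Real.sqrt j ≤ C * brak S ℓ →
            ∃ k ≤ k₀, ρ₀ / 2 * brak S ℓ ≤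
              |iteratedDeriv k
                (fun t => (∑ i ∈ S, (ℓ i : ℝ) * ωε i t) + (m t * freq j t + r j t)) h|) ∧
          (∀ ℓ : ℕ → ℤ, (∃ i ∈ S, ℓ i ≠ 0) → ∀ j j' : ℕ, 1 ≤ j → j ∉ S → 1 ≤ j' → j' ∉ S →
            |Real.sqrt j - Real.sqrt j'| ≤ C * brak S ℓ →
            ∃ k ≤ k₀, ρ₀ / 2 * brak S ℓ ≤
              |iteratedDeriv k
                (fun t => (∑ i ∈ S, (ℓ i : ℝ) * ωε i t)
                  + (m t * freq j t + r j t) - (m t * freq j' t + r j' t)) h|) ∧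
          (∀ ℓ : ℕ → ℤ, ∀ j j' : ℕ, 1 ≤ j → j ∉ S → 1 ≤ j' → j' ∉ S →
            Real.sqrt j + Real.sqrt j' ≤ C * brak S ℓ →
            ∃ k ≤ k₀, ρ₀ / 2 * brak S ℓ ≤
              |iteratedDeriv k
                (fun t => (∑ i ∈ S, (ℓ i : ℝ) * ωε i t)
                  + (m t * freq j t + r j t) + (m t * freq j' t + r j' t)) h|) := by
  obtain ⟨M, hM0, hM⟩ := exists_derivsBoundedAt_freq_sub_sqrt hh₁ k₀
  refine ⟨ρ₀ / (2 * (S.card + 2 ^ k₀ * (C + 2 * M) + 2)), by positivity,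
    fun δ hδ hδ₀ ωε m r hωε hm hr hωε_le hm_le hr_le h hh => ?_⟩
  have hx : 0 < h := hh₁.trans_le hh.1
  have hωε' (i : ℕ) (hi : i ∈ S) : DerivsBoundedAt k₀ (fun t => ωε i t - freq i t) h δ :=
    ⟨(hωε i hi).contDiffAt.sub (contDiffAt_freq i hx), fun k hk => hωε_le k hk h hh i hi⟩
  have hm' : DerivsBoundedAt k₀ (fun t => m t - 1) h δ :=
    ⟨hm.contDiffAt.sub contDiffAt_const, fun k hk => hm_le k hk h hh⟩
  have hr' (j : ℕ) (hj : 1 ≤ j) (hjS : j ∉ S) : DerivsBoundedAt k₀ (r j) h δ :=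
    ⟨(hr j hj hjS).contDiffAt, fun k hk => (le_mul_of_one_le_left (abs_nonneg _)
      (one_le_sqrt.mpr (by exact_mod_cast hj))).trans (hr_le k hk h hh j hj hjS)⟩
  have hM' (j : ℕ) (hj : 1 ≤ j) := hM j hj h hh.1
  refine ⟨fun ℓ hℓ => ?_, fun ℓ j hj hjS hjC => ?_, fun ℓ hℓ j j' hj hjS hj' hj'S hjj' => ?_,
    fun ℓ j j' hj hjS hj' hj'S hjj' => ?_⟩
  · exact exists_le_abs_iteratedDeriv_perturbed hx hωε' hm' hδ₀ (c := 0)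
      (DerivsBoundedAt.zero (by positivity))
      (by simpa using mul_nonneg hC.le (zero_le_one.trans (one_le_brak S ℓ)))
      (DerivsBoundedAt.zero (by positivity)) (fun t => by ring) (fun t => by ring) (H0 h hh ℓ hℓ)
  · exact exists_le_abs_iteratedDeriv_perturbed hx hωε' hm' hδ₀ (c := √j)
      ((hM' j hj).mono (by linarith)) (by rwa [abs_of_nonneg (sqrt_nonneg _)])
      ((hr' j hj hjS).mono (by linarith)) (fun t => by ring) (fun t => by ring)
      (HI h hh ℓ j hj hjS)
  · exact exists_le_abs_iteratedDeriv_perturbed hx hωε' hm' hδ₀ (c := √j - √j')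
      (((hM' j hj).sub (hM' j' hj')).mono (two_mul M).ge) hjj'
      (((hr' j hj hjS).sub (hr' j' hj' hj'S)).mono (two_mul δ).ge)
      (fun t => by ring) (fun t => by ring) (HIIminus h hh ℓ hℓ j j' hj hjS hj' hj'S)
  · exact exists_le_abs_iteratedDeriv_perturbed hx hωε' hm' hδ₀ (c := √j + √j')
      (((hM' j hj).add (hM' j' hj')).mono (two_mul M).ge)
      (by rwa [abs_of_nonneg (by positivity)])
      (((hr' j hj hjS).add (hr' j' hj' hj'S)).mono (two_mul δ).ge)
      (fun t => by ring) (fun t => by ring) (HIIplus h hh ℓ j j' hj hjS hj' hj'S)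

/-- Perturbed transversality: the transversality estimates for the unperturbed frequencies
are stable under perturbations that are δ-small, together with their h-derivatives up to
order k₀*, provided δ ≤ δ₀ with δ₀ small enough; the perturbed estimates hold with
constant ρ₀/2, restricted to indices satisfying √j ≤ C⟨ℓ⟩, |√j−√j'| ≤ C⟨ℓ⟩, √j+√j' ≤ C⟨ℓ⟩
respectively. -/
theorem perturbed_transversality (h₁ h₂ : ℝ) (hh₁ : 0 < h₁) (hh : h₁ < h₂)
    (S : Finset ℕ) (hS : ∀ i ∈ S, 1 ≤ i) (k₀ : ℕ) (ρ₀ C : ℝ) (hρ₀ : 0 < ρ₀) (hC : 0 < C)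
    (H0 : ∀ h ∈ Set.Icc h₁ h₂, ∀ ℓ : ℕ → ℤ, (∃ i ∈ S, ℓ i ≠ 0) →
      ∃ k ≤ k₀, ρ₀ * brak S ℓ ≤
        |iteratedDeriv k (fun t => ∑ i ∈ S, (ℓ i : ℝ) * freq i t) h|)
    (HI : ∀ h ∈ Set.Icc h₁ h₂, ∀ ℓ : ℕ → ℤ, ∀ j : ℕ, 1 ≤ j → j ∉ S →
      ∃ k ≤ k₀, ρ₀ * brak S ℓ ≤
        |iteratedDeriv k (fun t => (∑ i ∈ S, (ℓ i : ℝ) * freq i t) + freq j t) h|)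
    (HIIminus : ∀ h ∈ Set.Icc h₁ h₂, ∀ ℓ : ℕ → ℤ, (∃ i ∈ S, ℓ i ≠ 0) →
      ∀ j j' : ℕ, 1 ≤ j → j ∉ S → 1 ≤ j' → j' ∉ S →
      ∃ k ≤ k₀, ρ₀ * brak S ℓ ≤
        |iteratedDeriv k (fun t => (∑ i ∈ S, (ℓ i : ℝ) * freq i t) + freq j t - freq j' t) h|)
    (HIIplus : ∀ h ∈ Set.Icc h₁ h₂, ∀ ℓ : ℕ → ℤ, ∀ j j' : ℕ, 1 ≤ j → j ∉ S → 1 ≤ j' → j' ∉ S →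
      ∃ k ≤ k₀, ρ₀ * brak S ℓ ≤
        |iteratedDeriv k (fun t => (∑ i ∈ S, (ℓ i : ℝ) * freq i t) + freq j t + freq j' t) h|) :
    ∃ δ₀ : ℝ, 0 < δ₀ ∧ ∀ δ : ℝ, 0 < δ → δ ≤ δ₀ →
      ∀ (ωε : ℕ → ℝ → ℝ) (m : ℝ → ℝ) (r : ℕ → ℝ → ℝ),
        (∀ i ∈ S, ContDiff ℝ k₀ (ωε i)) →
        ContDiff ℝ k₀ m →
        (∀ j : ℕ, 1 ≤ j → j ∉ S → ContDiff ℝ k₀ (r j)) →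
        (∀ k ≤ k₀, ∀ h ∈ Set.Icc h₁ h₂, ∀ i ∈ S,
          |iteratedDeriv k (fun t => ωε i t - freq i t) h| ≤ δ) →
        (∀ k ≤ k₀, ∀ h ∈ Set.Icc h₁ h₂,
          |iteratedDeriv k (fun t => m t - 1) h| ≤ δ) →
        (∀ k ≤ k₀, ∀ h ∈ Set.Icc h₁ h₂, ∀ j : ℕ, 1 ≤ j → j ∉ S →
          Real.sqrt j * |iteratedDeriv k (r j) h| ≤ δ) →
        ∀ h ∈ Set.Icc h₁ h₂,
          (∀ ℓ : ℕ → ℤ, (∃ i ∈ S, ℓ i ≠ 0) →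
            ∃ k ≤ k₀, ρ₀ / 2 * brak S ℓ ≤
              |iteratedDeriv k (fun t => ∑ i ∈ S, (ℓ i : ℝ) * ωε i t) h|) ∧
          (∀ ℓ : ℕ → ℤ, ∀ j : ℕ, 1 ≤ j → j ∉ S → Real.sqrt j ≤ C * brak S ℓ →
            ∃ k ≤ k₀, ρ₀ / 2 * brak S ℓ ≤
              |iteratedDeriv k
                (fun t => (∑ i ∈ S, (ℓ i : ℝ) * ωε i t) + (m t * freq j t + r j t)) h|) ∧
          (∀ ℓ : ℕ → ℤ, (∃ i ∈ S, ℓ i ≠ 0) → ∀ j j' : ℕ, 1 ≤ j → j ∉ S → 1 ≤ j' → j' ∉ S →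
            |Real.sqrt j - Real.sqrt j'| ≤ C * brak S ℓ →
            ∃ k ≤ k₀, ρ₀ / 2 * brak S ℓ ≤
              |iteratedDeriv k
                (fun t => (∑ i ∈ S, (ℓ i : ℝ) * ωε i t)
                  + (m t * freq j t + r j t) - (m t * freq j' t + r j' t)) h|) ∧
          (∀ ℓ : ℕ → ℤ, ∀ j j' : ℕ, 1 ≤ j → j ∉ S → 1 ≤ j' → j' ∉ S →
            Real.sqrt j + Real.sqrt j' ≤ C * brak S ℓ →
            ∃ k ≤ k₀, ρ₀ / 2 * brak S ℓ ≤
              |iteratedDeriv k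
                (fun t => (∑ i ∈ S, (ℓ i : ℝ) * ωε i t)
                  + (m t * freq j t + r j t) + (m t * freq j' t + r j' t)) h|) :=
  perturbed_transversality_general h₁ h₂ hh₁ S k₀ ρ₀ C hρ₀ hC H0 HI HIIminus HIIplus
end

section
/- (Index restrictions for nonempty resonant sets.) Let 0 < h₁ < h₂, ν ≥ 1 an integer, τ ≥ 0, d ≥ 0 and M > 0. Then there exist δ > 0, C > 0 and γ₀ ∈ (0,1], depending only on h₁, h₂, ν, τ, d, M, with the following property. Let h ∈ [h₁,h₂], ω ∈ ℝ^ν with max_i|ω_i| ≤ M, m ∈ ℝ with |m − 1| ≤ δ, and (r_j)_{j≥1} real numbers with √j·|r_j| ≤ δ for all j ≥ 1; set μ_j := m·(j·tanh(h·j))^{1/2} + r_j. Then for every γ ∈ (0,γ₀], every ℓ ∈ ℤ^ν and all positive integers j, j': (1) if |ω·ℓ + μ_j| < 4γ·√j·⟨ℓ⟩^{−τ} then √j ≤ C⟨ℓ⟩; (2) if |ω·ℓ + μ_j − μ_{j'}| < 4γ·j^{−d}·(j')^{−d}·⟨ℓ⟩^{−τ} then |√j − √j'| ≤ C⟨ℓ⟩;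 (3) if |ω·ℓ + μ_j + μ_{j'}| < 4γ·(√j + √j')·⟨ℓ⟩^{−τ} then √j + √j' ≤ C⟨ℓ⟩. -/
set_option maxHeartbeats 1000000


/-- ⟨ℓ⟩ := max{1, max_i |ℓ_i|} for an integer vector ℓ ∈ ℤ^ν. -/
noncomputable def brakF {ν : ℕ} (ℓ : Fin ν → ℤ) : ℝ :=
  ((max 1 (Finset.univ.sup fun i => (ℓ i).natAbs) : ℕ) : ℝ)

private lemma myTanhMono {x y : ℝ} (hxy : x ≤ y) : Real.tanh x ≤ Real.tanh y := by
  rw [Real.tanh_eq_sinh_div_cosh, Real.tanh_eq_sinh_div_cosh,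
    div_le_div_iff₀ (Real.cosh_pos x) (Real.cosh_pos y)]
  have h : Real.sinh (x - y) ≤ 0 := by
    rw [← Real.sinh_zero]
    exact Real.sinh_le_sinh.mpr (by linarith)
  rw [Real.sinh_sub] at h
  linarith

private lemma myTanhPos {x : ℝ} (hx : 0 < x) : 0 < Real.tanh x := by
  rw [Real.tanh_eq_sinh_div_cosh]
  exact div_pos (by rwa [Real.sinh_pos_iff]) (Real.cosh_pos x)

private lemma div_trick {c C x y K : ℝ} (hc : 0 < c) (hCdef : C = K / c)
    (h : c * x ≤ K * y) : x ≤ C * y := by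
  rw [hCdef, div_mul_eq_mul_div, le_div_iff₀ hc]
  nlinarith [h]

private lemma thresh {γ c e x : ℝ} (hγ : 0 < γ) (h4 : 4 * γ ≤ c / 2) (he0 : 0 ≤ e)
    (he1 : e ≤ 1) (hx : 0 ≤ x) : 4 * γ * x * e ≤ c / 2 * x := by
  nlinarith [mul_nonneg (mul_nonneg (by linarith : (0:ℝ) ≤ 4 * γ) hx) (sub_nonneg.mpr he1),
    mul_nonneg (by linarith : (0:ℝ) ≤ c / 2 - 4 * γ) hx]

private lemma four_mul_le {γ a b e : ℝ} (hγ1 : γ ≤ 1) (hγ0 : 0 ≤ γ) (ha1 : a ≤ 1) (ha0 : 0 ≤ a)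
    (hb1 : b ≤ 1) (hb0 : 0 ≤ b) (he1 : e ≤ 1) (he0 : 0 ≤ e) : 4 * γ * a * b * e ≤ 4 := by
  have h1 : γ * a ≤ 1 := by nlinarith
  have h2 : γ * a * b ≤ 1 := by nlinarith
  have h3 : γ * a * b * e ≤ 1 := by nlinarith
  nlinarith

private lemma aux_abs {a b fa fb k : ℝ} (ha : 0 ≤ a) (hb : 0 ≤ b) (hka : k ≤ fa) (hkb : k ≤ fb)
    (hk : 0 ≤ k) (h1 : a ≤ b → fa ≤ fb) (h2 : b ≤ a → fb ≤ fa) :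
    k * |a - b| ≤ |a * fa - b * fb| := by
  rcases le_total a b with hab | hab
  · have hf := h1 hab
    have hfb0 : 0 ≤ fb := le_trans hk hkb
    have hle : a * fa ≤ b * fb := by
      nlinarith [mul_nonneg ha (sub_nonneg.mpr hf), mul_nonneg (sub_nonneg.mpr hab) hfb0]
    rw [abs_of_nonpos (by linarith), abs_of_nonpos (by linarith)]
    nlinarith [mul_nonneg (sub_nonneg.mpr hab) (sub_nonneg.mpr hkb),
      mul_nonneg ha (sub_nonneg.mpr hf)]
  · have hf := h2 hab
    have hfa0 : 0 ≤ fa := le_trans hk hka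
    have hle : b * fb ≤ a * fa := by
      nlinarith [mul_nonneg hb (sub_nonneg.mpr hf), mul_nonneg (sub_nonneg.mpr hab) hfa0]
    rw [abs_of_nonneg (by linarith), abs_of_nonneg (by linarith)]
    nlinarith [mul_nonneg (sub_nonneg.mpr hab) (sub_nonneg.mpr hka),
      mul_nonneg hb (sub_nonneg.mpr hf)]

/-- Index restrictions for nonempty resonant sets: with μ_j = m √(j tanh(h j)) + r_j,
if the 1st or 2nd order Melnikov quantity is smaller than the resonant threshold, then the
indices j, j' are constrained by √j ≤ C⟨ℓ⟩, |√j−√j'| ≤ C⟨ℓ⟩, √j+√j' ≤ C⟨ℓ⟩ respectively. -/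
theorem resonant_sets_index_restrictions (h₁ h₂ : ℝ) (hh₁ : 0 < h₁) (hh : h₁ < h₂)
    (ν : ℕ) (hν : 1 ≤ ν) (τ d M : ℝ) (hτ : 0 ≤ τ) (hd : 0 ≤ d) (hM : 0 < M) :
    ∃ δ C γ₀ : ℝ, 0 < δ ∧ 0 < C ∧ 0 < γ₀ ∧ γ₀ ≤ 1 ∧
      ∀ h ∈ Set.Icc h₁ h₂, ∀ ω : Fin ν → ℝ, (∀ i, |ω i| ≤ M) →
      ∀ m : ℝ, |m - 1| ≤ δ → ∀ r : ℕ → ℝ, (∀ j : ℕ, 1 ≤ j → Real.sqrt j * |r j| ≤ δ) →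
      ∀ γ : ℝ, 0 < γ → γ ≤ γ₀ → ∀ ℓ : Fin ν → ℤ, ∀ j j' : ℕ, 1 ≤ j → 1 ≤ j' →
        ((|(∑ i, ω i * (ℓ i : ℝ)) +
              (m * Real.sqrt ((j : ℝ) * Real.tanh (h * (j : ℝ))) + r j)| <
            4 * γ * Real.sqrt j * brakF ℓ ^ (-τ) →
          Real.sqrt j ≤ C * brakF ℓ) ∧
        (|(∑ i, ω i * (ℓ i : ℝ)) +
              (m * Real.sqrt ((j : ℝ) * Real.tanh (h * (j : ℝ))) + r j) -
              (m * Real.sqrt ((j' : ℝ) * Real.tanh (h * (j' : ℝ))) + r j')| <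
            4 * γ * (j : ℝ) ^ (-d) * (j' : ℝ) ^ (-d) * brakF ℓ ^ (-τ) →
          |Real.sqrt j - Real.sqrt j'| ≤ C * brakF ℓ) ∧
        (|(∑ i, ω i * (ℓ i : ℝ)) +
              (m * Real.sqrt ((j : ℝ) * Real.tanh (h * (j : ℝ))) + r j) +
              (m * Real.sqrt ((j' : ℝ) * Real.tanh (h * (j' : ℝ))) + r j')| <
            4 * γ * (Real.sqrt j + Real.sqrt j') * brakF ℓ ^ (-τ) →
          Real.sqrt j + Real.sqrt j' ≤ C * brakF ℓ)) := by
  set c : ℝ := Real.sqrt (Real.tanh h₁) / 2 with hcdef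
  have htanh1 : 0 < Real.tanh h₁ := myTanhPos hh₁
  have hc : 0 < c := by
    have := Real.sqrt_pos.mpr htanh1
    rw [hcdef]; linarith
  have hνM : 0 ≤ (ν : ℝ) * M := mul_nonneg (Nat.cast_nonneg ν) hM.le
  have hK : 0 < 2 * ((ν : ℝ) * M + 5) := by linarith
  refine ⟨1/2, 2 * ((ν : ℝ) * M + 5) / c, min 1 (c/8), by norm_num,
    div_pos hK hc, lt_min one_pos (by linarith), min_le_left _ _, ?_⟩
  intro h hhIcc ω hω m hm r hr γ hγ hγ' ℓ j j' hj hj'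
  have hh0 : 0 < h := lt_of_lt_of_le hh₁ hhIcc.1
  have hγ1 : γ ≤ 1 := le_trans hγ' (min_le_left _ _)
  have hγc : 4 * γ ≤ c / 2 := by
    have := le_trans hγ' (min_le_right 1 (c/8)); linarith
  -- brakF facts
  have hL1 : (1:ℝ) ≤ brakF ℓ := by
    unfold brakF; exact_mod_cast Nat.one_le_cast.mpr (le_max_left 1 _)
  have hL0 : 0 < brakF ℓ := lt_of_lt_of_le one_pos hL1
  have hLτ1 : brakF ℓ ^ (-τ) ≤ 1 :=
    Real.rpow_le_one_of_one_le_of_nonpos hL1 (by linarith)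
  have hLτ0 : 0 < brakF ℓ ^ (-τ) := Real.rpow_pos_of_pos hL0 _
  -- sum bound
  have hℓ : ∀ i, |(ℓ i : ℝ)| ≤ brakF ℓ := by
    intro i
    have h1 : (ℓ i).natAbs ≤ max 1 (Finset.univ.sup fun i => (ℓ i).natAbs) :=
      le_max_of_le_right (Finset.le_sup (f := fun i => (ℓ i).natAbs) (Finset.mem_univ i))
    have h2 : (((ℓ i).natAbs : ℕ) : ℝ) ≤ brakF ℓ := by
      unfold brakF; exact_mod_cast h1
    rwa [Nat.cast_natAbs, Int.cast_abs] at h2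
  have hS : |∑ i, ω i * (ℓ i : ℝ)| ≤ (ν : ℝ) * M * brakF ℓ := by
    calc |∑ i, ω i * (ℓ i : ℝ)| ≤ ∑ i, |ω i * (ℓ i : ℝ)| := Finset.abs_sum_le_sum_abs _ _
      _ ≤ ∑ _i : Fin ν, M * brakF ℓ := Finset.sum_le_sum fun i _ => by
          rw [abs_mul]; exact mul_le_mul (hω i) (hℓ i) (abs_nonneg _) hM.le
      _ = (ν : ℝ) * M * brakF ℓ := by
          simp [Finset.sum_const, Finset.card_univ, nsmul_eq_mul]; ring
  obtain ⟨hS1, hS2⟩ := abs_le.mp hS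
  -- per-index facts
  have hm12 : 1/2 ≤ m ∧ m ≤ 3/2 := by
    obtain ⟨a, b⟩ := abs_le.mp hm; constructor <;> linarith
  have key : ∀ k : ℕ, 1 ≤ k → 1 ≤ Real.sqrt k ∧ 2 * c ≤ Real.sqrt (Real.tanh (h * (k:ℝ))) ∧
      Real.sqrt ((k:ℝ) * Real.tanh (h * (k:ℝ)))
        = Real.sqrt k * Real.sqrt (Real.tanh (h * (k:ℝ))) := by
    intro k hk
    have hk1 : (1:ℝ) ≤ (k : ℝ) := Nat.one_le_cast.mpr hk
    refine ⟨Real.one_le_sqrt.mpr hk1, ?_, Real.sqrt_mul (by linarith) _⟩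
    have hhk : h₁ ≤ h * k := by nlinarith [hhIcc.1]
    have := Real.sqrt_le_sqrt (myTanhMono hhk)
    rw [hcdef]; linarith
  have hrb : ∀ k : ℕ, 1 ≤ k → |r k| ≤ 1/2 := by
    intro k hk
    have h1 := hr k hk
    have h2 := (key k hk).1
    nlinarith [abs_nonneg (r k)]
  have μlow : ∀ k : ℕ, 1 ≤ k →
      c * Real.sqrt k - 1/2 ≤ m * Real.sqrt ((k:ℝ) * Real.tanh (h * (k:ℝ))) + r k := by
    intro k hk
    obtain ⟨hs1, hf, hsplit⟩ := key k hk
    obtain ⟨hr1, _⟩ := abs_le.mp (hrb k hk)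
    have hω0 : 0 ≤ Real.sqrt ((k:ℝ) * Real.tanh (h * (k:ℝ))) := Real.sqrt_nonneg _
    have hωlow : 2 * c * Real.sqrt k ≤ Real.sqrt ((k:ℝ) * Real.tanh (h * (k:ℝ))) := by
      rw [hsplit]
      nlinarith [Real.sqrt_nonneg (k:ℝ)]
    nlinarith [mul_nonneg (by linarith [hm12.1] : (0:ℝ) ≤ m - 1/2) hω0]
  obtain ⟨hsj, hfj, hsplitj⟩ := key j hj
  obtain ⟨hsj', hfj', hsplitj'⟩ := key j' hj'
  refine ⟨?_, ?_, ?_⟩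
  -- Claim 1
  · intro H1
    have e1 := thresh hγ hγc hLτ0.le hLτ1 (Real.sqrt_nonneg (j:ℝ))
    obtain ⟨hlt1, hlt2⟩ := abs_lt.mp H1
    have hμ := μlow j hj
    refine div_trick hc rfl ?_
    linarith [hL1, hνM]
  -- Claim 2
  · intro H2
    have hjd1 : (j:ℝ) ^ (-d) ≤ 1 :=
      Real.rpow_le_one_of_one_le_of_nonpos (Nat.one_le_cast.mpr hj) (by linarith)
    have hjd0 : 0 < (j:ℝ) ^ (-d) := Real.rpow_pos_of_pos (by exact_mod_cast hj) _
    have hjd1' : (j':ℝ) ^ (-d) ≤ 1 :=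
      Real.rpow_le_one_of_one_le_of_nonpos (Nat.one_le_cast.mpr hj') (by linarith)
    have hjd0' : 0 < (j':ℝ) ^ (-d) := Real.rpow_pos_of_pos (by exact_mod_cast hj') _
    have hT : 4 * γ * (j:ℝ) ^ (-d) * (j':ℝ) ^ (-d) * brakF ℓ ^ (-τ) ≤ 4 :=
      four_mul_le hγ1 hγ.le hjd1 hjd0.le hjd1' hjd0'.le hLτ1 hLτ0.le
    obtain ⟨hlt1, hlt2⟩ := abs_lt.mp H2
    obtain ⟨hrj1, hrj2⟩ := abs_le.mp (hrb j hj)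
    obtain ⟨hrj1', hrj2'⟩ := abs_le.mp (hrb j' hj')
    have habs : |m * (Real.sqrt ((j:ℝ) * Real.tanh (h * (j:ℝ)))
        - Real.sqrt ((j':ℝ) * Real.tanh (h * (j':ℝ))))| ≤ (ν : ℝ) * M * brakF ℓ + 5 :=
      abs_le.mpr ⟨by linarith, by linarith⟩
    rw [abs_mul, abs_of_pos (by linarith [hm12.1] : 0 < m)] at habs
    have hωd : |Real.sqrt ((j:ℝ) * Real.tanh (h * (j:ℝ)))
        - Real.sqrt ((j':ℝ) * Real.tanh (h * (j':ℝ)))| ≤ 2 * ((ν : ℝ) * M * brakF ℓ + 5) := by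
      nlinarith [mul_nonneg (by linarith [hm12.1] : (0:ℝ) ≤ m - 1/2)
        (abs_nonneg (Real.sqrt ((j:ℝ) * Real.tanh (h * (j:ℝ)))
          - Real.sqrt ((j':ℝ) * Real.tanh (h * (j':ℝ))))),
        abs_nonneg (Real.sqrt ((j:ℝ) * Real.tanh (h * (j:ℝ)))
          - Real.sqrt ((j':ℝ) * Real.tanh (h * (j':ℝ))))]
    have haux : 2 * c * |Real.sqrt j - Real.sqrt j'|
        ≤ |Real.sqrt ((j:ℝ) * Real.tanh (h * (j:ℝ)))
          - Real.sqrt ((j':ℝ) * Real.tanh (h * (j':ℝ)))| := by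
      rw [hsplitj, hsplitj']
      refine aux_abs (Real.sqrt_nonneg _) (Real.sqrt_nonneg _) hfj hfj' (by linarith) ?_ ?_
      · intro hab
        refine Real.sqrt_le_sqrt (myTanhMono ?_)
        have : (j:ℝ) ≤ (j':ℝ) :=
          (Real.sqrt_le_sqrt_iff (Nat.cast_nonneg j')).mp hab
        nlinarith
      · intro hab
        refine Real.sqrt_le_sqrt (myTanhMono ?_)
        have : (j':ℝ) ≤ (j:ℝ) :=
          (Real.sqrt_le_sqrt_iff (Nat.cast_nonneg j)).mp hab
        nlinarith
    refine div_trick hc rfl ?_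
    linarith [hL1, haux, hωd, mul_nonneg hνM hL0.le]
  -- Claim 3
  · intro H3
    have hx0 : (0:ℝ) ≤ Real.sqrt j + Real.sqrt j' := by
      have := Real.sqrt_nonneg (j:ℝ); have := Real.sqrt_nonneg (j':ℝ); linarith
    have e3 := thresh hγ hγc hLτ0.le hLτ1 hx0
    obtain ⟨hlt1, hlt2⟩ := abs_lt.mp H3
    have hμ := μlow j hj
    have hμ' := μlow j' hj'
    refine div_trick hc rfl ?_
    linarith [hL1, hνM]
end
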